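/- arXiv:1311.2242 — 2 statements merged into one kernel-verified Lean document; each statement's English description precedes it below -/
import Mathlib

section
/- Let p be an odd prime. Then, as an exact identity, W_p = ∑_{a=1}^{p−1} (−1)^a · binomial(p−1, a) · q_p(a). -/
open Finset

/-- `x ≡ y (mod p^k)` for rationals: `x - y = p^k * (c/d)` with `p ∤ d`. -/
def ratCongr (p k : ℕ) (x y : ℚ) : Prop :=
  ∃ c d : ℤ, ¬ (p : ℤ) ∣ d ∧ x - y = (p : ℚ) ^ k * ((c : ℚ) / (d : ℚ))

/-- The Wilson quotient `W_p = ((p-1)! + 1)/p` (an integer by Wilson's theorem). -/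
def wilsonQuotient (p : ℕ) : ℤ := ((Nat.factorial (p - 1) : ℤ) + 1) / p

/-- The Fermat quotient `q_p(a) = (a^(p-1) - 1)/p` (an integer for `p ∤ a`). -/
def fermatQuotient (p a : ℕ) : ℤ := ((a : ℤ) ^ (p - 1) - 1) / p

/-- A prime `p` is a Wilson prime if `p ∣ W_p`. -/
def IsWilsonPrime (p : ℕ) : Prop := (p : ℤ) ∣ wilsonQuotient p

/-- A prime `p` is a Lerch prime if `∑_{a=1}^{p-1} q_p(a) ≡ W_p (mod p²)`. -/
def IsLerchPrime (p : ℕ) : Prop :=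
  (p : ℤ) ^ 2 ∣ (∑ a ∈ Icc 1 (p - 1), fermatQuotient p a) - wilsonQuotient p

/-- The harmonic number `H_a = ∑_{k=1}^{a} 1/k`. -/
def harmonicNum (a : ℕ) : ℚ := ∑ k ∈ Icc 1 a, (1 : ℚ) / k

/-- The generalized harmonic number `H_{a,2} = ∑_{k=1}^{a} 1/k²`. -/
def harmonicNum2 (a : ℕ) : ℚ := ∑ k ∈ Icc 1 a, (1 : ℚ) / (k : ℚ) ^ 2

/-! Multiplying by `p` turns the identity into
`∑_{a=1}^{p-1} (-1)^a C(p-1,a) (a^{p-1} - 1) = (p-1)! + 1`. As `p - 1` is even, adding back the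
term `a = 0`, which is `-1`, gives the `(p-1)`-th forward difference of `x ↦ x^{p-1} - 1` at `0`,
and that is `(p-1)!`. -/

open scoped Nat

theorem sum_range_neg_one_pow_sub_mul_choose_mul_pow_self (n : ℕ) :
    ∑ k ∈ range (n + 1), (-1 : ℤ) ^ (n - k) * n.choose k * (k : ℤ) ^ n = n ! := by
  have h := congr_fun (fwdDiff_iter_eq_factorial (R := ℤ) (n := n)) 0
  rw [fwdDiff_iter_eq_sum_shift] at h
  simpa using h

theorem sum_Icc_neg_one_pow_mul_choose_mul_pow_sub_one {n : ℕ} (hn : n ≠ 0) (he : Even n) :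
    ∑ k ∈ Icc 1 n, (-1 : ℤ) ^ k * n.choose k * ((k : ℤ) ^ n - 1) = n ! + 1 := by
  have hsign : ∀ k ∈ range (n + 1), (-1 : ℤ) ^ (n - k) = (-1) ^ k := fun k hk ↦
    neg_one_pow_congr <| by simp [Nat.even_sub (mem_range_succ_iff.mp hk), he]
  have hpow := sum_range_neg_one_pow_sub_mul_choose_mul_pow_self n
  rw [sum_congr rfl fun k hk ↦ by rw [hsign k hk]] at hpow
  have hconst := Int.alternating_sum_range_choose_of_ne hn
  have hsplit : range (n + 1) = insert 0 (Icc 1 n) := by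
    rw [range_eq_Ico, Ico_add_one_right_eq_Icc, ← insert_Icc_add_one_left_eq_Icc n.zero_le,
      zero_add]
  rw [hsplit, sum_insert (by simp)] at hpow hconst
  simp only [Int.reduceNeg, pow_zero, Nat.choose_zero_right, Nat.cast_one, mul_one,
    CharP.cast_eq_zero, zero_pow hn, mul_zero, zero_add] at hpow hconst
  simp only [mul_sub, mul_one, sum_sub_distrib]
  omega

theorem mul_wilsonQuotient {p : ℕ} (hp : p.Prime) :
    (p : ℤ) * wilsonQuotient p = (p - 1)! + 1 := by
  have : Fact p.Prime := ⟨hp⟩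
  refine Int.mul_ediv_cancel' ((ZMod.intCast_zmod_eq_zero_iff_dvd _ p).mp ?_)
  simp [ZMod.wilsons_lemma]

theorem mul_fermatQuotient {p a : ℕ} (hp : p.Prime) (ha : ¬ p ∣ a) :
    (p : ℤ) * fermatQuotient p a = (a : ℤ) ^ (p - 1) - 1 :=
  Int.mul_ediv_cancel' (Int.ModEq.pow_card_sub_one_eq_one hp
    (Nat.isCoprime_iff_coprime.mpr (hp.coprime_iff_not_dvd.mpr ha).symm)).symm.dvd

theorem stmt_10 (p : ℕ) (hp : p.Prime) (hodd : Odd p) :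
    wilsonQuotient p =
      ∑ a ∈ Icc 1 (p - 1), (-1) ^ a * ((p - 1).choose a : ℤ) * fermatQuotient p a := by
  have hn : p - 1 ≠ 0 := by have := hp.two_le; omega
  have hnot_dvd : ∀ a ∈ Icc 1 (p - 1), ¬ p ∣ a := fun a ha ↦
    Nat.not_dvd_of_pos_of_lt (mem_Icc.mp ha).1 (by have := (mem_Icc.mp ha).2; omega)
  refine mul_left_cancel₀ (Int.natCast_ne_zero.mpr hp.ne_zero) ?_
  rw [mul_wilsonQuotient hp, mul_sum,
    ← sum_Icc_neg_one_pow_mul_choose_mul_pow_sub_one hn (Nat.Odd.sub_odd hodd odd_one)]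
  refine sum_congr rfl fun a ha ↦ ?_
  rw [mul_left_comm, mul_fermatQuotient hp (hnot_dvd a ha)]
end

section
/- Let p be a prime with p > 3. Then p is a Lerch prime if and only if ∑_{a=1}^{p−1} H_a·q_p(a) ≡ 0 (mod p) as rational numbers, i.e. the rational number ∑_{a=1}^{p−1} H_a·q_p(a) equals p·(a/b) for some integers a, b with p ∤ b. -/
open Finset

/-!
For odd `p` the Wilson quotient is an exact alternating sum of Fermat quotients: evaluating the
`(p-1)`-st forward difference of `x ↦ x^(p-1)` at `0` gives
`(p-1)! = ∑ (-1)^a C(p-1,a) a^(p-1)`, and substituting `a^(p-1) = 1 + p q_p(a)` and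
`(p-1)! = p W_p - 1` yields `W_p = ∑_{a=1}^{p-1} (-1)^a C(p-1,a) q_p(a)`.
Since `(-1)^a C(p-1,a) = ∏_{k ≤ a} (1 - p/k) ≡ 1 - p H_a (mod p²)`, this gives
`W_p ≡ ∑ q_p(a) - p ∑ H_a q_p(a) (mod p²)`, so `p² ∣ ∑ q_p(a) - W_p` exactly when
`p ∣ ∑ H_a q_p(a)`. Congruences between `p`-integral rationals are handled as bounds on
`padicNorm p`.
-/

open scoped Nat

theorem sum_range_neg_one_pow_mul_choose_mul_pow (n : ℕ) :
    ∑ k ∈ range (n + 1), (-1 : ℤ) ^ k * n.choose k * (k : ℤ) ^ n = (-1) ^ n * n ! := by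
  have h := fwdDiff_iter_eq_sum_shift (h := (1 : ℤ)) (fun r : ℤ => r ^ n) n 0
  rw [fwdDiff_iter_eq_factorial, Pi.natCast_apply] at h
  rw [h, mul_sum]
  refine sum_congr rfl fun k hk => ?_
  have hsign : (-1 : ℤ) ^ n * (-1) ^ (n - k) = (-1) ^ k := by
    rw [← Nat.sub_add_cancel (mem_range_succ_iff.mp hk), pow_add, Nat.add_sub_cancel,
      mul_right_comm, ← pow_add, Even.neg_one_pow ⟨_, rfl⟩, one_mul]
  simp only [zero_add, smul_eq_mul, nsmul_eq_mul, mul_one, ← hsign]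
  ring

theorem range_add_one_eq_insert_zero_Icc (n : ℕ) : range (n + 1) = insert 0 (Icc 1 n) := by
  ext k
  simp only [mem_range, mem_insert, mem_Icc]
  omega

theorem sum_Icc_neg_one_pow_mul_choose_mul_pow {n : ℕ} (hn : n ≠ 0) :
    ∑ k ∈ Icc 1 n, (-1 : ℤ) ^ k * n.choose k * (k : ℤ) ^ n = (-1) ^ n * n ! := by
  rw [← sum_range_neg_one_pow_mul_choose_mul_pow, range_add_one_eq_insert_zero_Icc,
    sum_insert (by simp)]
  simp [hn]

theorem sum_Icc_neg_one_pow_mul_choose {n : ℕ} (hn : n ≠ 0) :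
    ∑ k ∈ Icc 1 n, (-1 : ℤ) ^ k * n.choose k = -1 := by
  have h := Int.alternating_sum_range_choose (n := n)
  rw [range_add_one_eq_insert_zero_Icc, sum_insert (by simp), if_neg hn] at h
  simp only [pow_zero, Nat.choose_zero_right, Nat.cast_one, mul_one] at h
  linear_combination h

theorem cast_choose_succ_mul (n a : ℕ) :
    (n.choose (a + 1) : ℚ) * (a + 1) = n.choose a * (n - a) := by
  rcases le_or_gt a n with h | h
  · rw [← Nat.cast_sub h]
    exact_mod_cast Nat.choose_succ_right_eq n a
  · simp [Nat.choose_eq_zero_of_lt h, Nat.choose_eq_zero_of_lt (h.trans (lt_add_one a))]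

theorem neg_one_pow_mul_choose_eq_prod (n a : ℕ) :
    (-1 : ℚ) ^ a * n.choose a = ∏ k ∈ Icc 1 a, (1 - ((n : ℚ) + 1) / k) := by
  induction a with
  | zero => simp
  | succ a ih =>
    rw [prod_Icc_succ_top (by omega), ← ih]
    have ha : (a : ℚ) + 1 ≠ 0 := by positivity
    rw [eq_div_of_mul_eq ha (cast_choose_succ_mul n a)]
    push_cast
    field_simp
    ring

section

variable {p : ℕ}

theorem natCast_mul_fermatQuotient (hp : p.Prime) {a : ℕ} (ha : ¬ p ∣ a) :
    (p : ℤ) * fermatQuotient p a = (a : ℤ) ^ (p - 1) - 1 :=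
  Int.mul_ediv_cancel' <| Int.prime_dvd_pow_sub_one hp <|
    Nat.isCoprime_iff_coprime.mpr ((Nat.Prime.coprime_iff_not_dvd hp).mpr ha).symm

theorem natCast_mul_wilsonQuotient (hp : p.Prime) :
    (p : ℤ) * wilsonQuotient p = (p - 1)! + 1 := by
  have := Fact.mk hp
  refine Int.mul_ediv_cancel' ?_
  rw [← ZMod.intCast_zmod_eq_zero_iff_dvd]
  push_cast
  rw [ZMod.wilsons_lemma, neg_add_cancel]

theorem wilsonQuotient_eq_sum (hp : p.Prime) (hp2 : p ≠ 2) :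
    wilsonQuotient p =
      ∑ a ∈ Icc 1 (p - 1), (-1 : ℤ) ^ a * (p - 1).choose a * fermatQuotient p a := by
  have hn : p - 1 ≠ 0 := by have := hp.two_le; omega
  refine mul_left_cancel₀ (Int.natCast_ne_zero.mpr hp.ne_zero) ?_
  rw [natCast_mul_wilsonQuotient hp, mul_sum]
  calc ((p - 1)! : ℤ) + 1
      = ∑ a ∈ Icc 1 (p - 1), (-1 : ℤ) ^ a * (p - 1).choose a * (a : ℤ) ^ (p - 1)
        - ∑ a ∈ Icc 1 (p - 1), (-1 : ℤ) ^ a * (p - 1).choose a := by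
        rw [sum_Icc_neg_one_pow_mul_choose_mul_pow hn, sum_Icc_neg_one_pow_mul_choose hn,
          (hp.even_sub_one hp2).neg_one_pow]
        ring
    _ = _ := by
        rw [← sum_sub_distrib]
        refine sum_congr rfl fun a ha => ?_
        have ha := mem_Icc.mp ha
        rw [mul_left_comm,
          natCast_mul_fermatQuotient hp (Nat.not_dvd_of_pos_of_lt ha.1 (by omega))]
        ring

section PadicNorm

variable [Fact p.Prime]

theorem padicNorm_prime_pow (k : ℕ) : padicNorm p ((p : ℚ) ^ k) = (p : ℚ) ^ (-(k : ℤ)) := by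
  rw [IsAbsoluteValue.abv_pow (padicNorm p), padicNorm.padicNorm_p_of_prime, zpow_neg,
    zpow_natCast, inv_pow]

theorem padicNorm_one_div_natCast {k : ℕ} (hk₀ : 0 < k) (hkp : k < p) :
    padicNorm p (1 / k) = 1 := by
  rw [padicNorm.div, padicNorm.one,
    (padicNorm.nat_eq_one_iff k).mpr (Nat.not_dvd_of_pos_of_lt hk₀ hkp), div_one]

theorem not_dvd_den_of_padicNorm_le_one {x : ℚ} (hx : padicNorm p x ≤ 1) : ¬ p ∣ x.den := by
  intro hden
  have hnum : (p : ℤ) ∣ x.num := by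
    rw [← padicNorm.int_lt_one_iff, ← Rat.mul_den_eq_num, padicNorm.mul]
    exact mul_lt_one_of_nonneg_of_lt_one_right hx (padicNorm.nonneg _)
      ((padicNorm.nat_lt_one_iff _).mpr hden)
  exact Nat.not_coprime_of_dvd_of_dvd (Fact.out : p.Prime).one_lt (Int.natCast_dvd.mp hnum) hden
    x.reduced

theorem ratCongr_zero_iff {k : ℕ} {x : ℚ} :
    ratCongr p k x 0 ↔ padicNorm p x ≤ (p : ℚ) ^ (-(k : ℤ)) := by
  have hp : (0 : ℚ) < p := Nat.cast_pos.mpr (Fact.out : p.Prime).pos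
  constructor
  · rintro ⟨c, d, hd, hx⟩
    rw [sub_zero] at hx
    rw [hx, padicNorm.mul, padicNorm_prime_pow, padicNorm.div,
      (padicNorm.int_eq_one_iff d).mpr hd, div_one]
    exact mul_le_of_le_one_right (by positivity) (padicNorm.of_int c)
  · intro hx
    set y := x / (p : ℚ) ^ k
    have hy : padicNorm p y ≤ 1 := by
      rw [padicNorm.div, padicNorm_prime_pow, div_le_one (zpow_pos hp _)]
      exact hx
    refine ⟨y.num, y.den, by exact_mod_cast not_dvd_den_of_padicNorm_le_one hy, ?_⟩
    rw [sub_zero, Int.cast_natCast, Rat.num_div_den, mul_div_cancel₀ _ (by positivity)]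

theorem padicNorm_le_iff_of_padicNorm_sub_le {x y r : ℚ} (h : padicNorm p (x - y) ≤ r) :
    padicNorm p x ≤ r ↔ padicNorm p y ≤ r := by
  constructor <;> intro hle
  · simpa using padicNorm.sub.trans (max_le hle h)
  · simpa using padicNorm.nonarchimedean.trans (max_le h hle)

theorem padicNorm_prime_mul_le_iff {x : ℚ} {k : ℤ} :
    padicNorm p (p * x) ≤ (p : ℚ) ^ (-(k + 1)) ↔ padicNorm p x ≤ (p : ℚ) ^ (-k) := by
  have hp : (0 : ℚ) < p := Nat.cast_pos.mpr (Fact.out : p.Prime).pos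
  rw [padicNorm.mul, padicNorm.padicNorm_p_of_prime, neg_add, zpow_add₀ hp.ne', zpow_neg_one,
    mul_comm _ (p : ℚ)⁻¹, mul_le_mul_iff_of_pos_left (inv_pos.mpr hp)]

theorem padicNorm_prod_one_add_mul_sub_le {ι : Type*} (s : Finset ι) {t : ℚ} {x : ι → ℚ}
    (ht : padicNorm p t ≤ 1) (hx : ∀ i ∈ s, padicNorm p (x i) ≤ 1) :
    padicNorm p (∏ i ∈ s, (1 + t * x i) - (1 + t * ∑ i ∈ s, x i)) ≤
      padicNorm p t ^ 2 := by
  classical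
  induction s using Finset.induction_on with
  | empty => simpa using sq_nonneg _
  | insert i s hi ih =>
    have hxi := hx i (mem_insert_self i s)
    have hS : padicNorm p (∑ j ∈ s, x j) ≤ 1 :=
      padicNorm.sum_le' (fun j hj => hx j (mem_insert_of_mem hj)) zero_le_one
    have hfactor : padicNorm p (1 + t * x i) ≤ 1 := by
      refine padicNorm.nonarchimedean.trans (max_le padicNorm.one.le ?_)
      rw [padicNorm.mul]
      exact mul_le_one₀ ht (padicNorm.nonneg _) hxi
    rw [prod_insert hi, sum_insert hi]
    rw [show (1 + t * x i) * ∏ j ∈ s, (1 + t * x j) - (1 + t * (x i + ∑ j ∈ s, x j))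
        = (∏ j ∈ s, (1 + t * x j) - (1 + t * ∑ j ∈ s, x j)) * (1 + t * x i)
          + t ^ 2 * (x i * ∑ j ∈ s, x j) by ring]
    refine padicNorm.nonarchimedean.trans (max_le ?_ ?_) <;> rw [padicNorm.mul]
    · exact (mul_le_of_le_one_right (padicNorm.nonneg _) hfactor).trans
        (ih fun j hj => hx j (mem_insert_of_mem hj))
    · rw [IsAbsoluteValue.abv_pow (padicNorm p), padicNorm.mul]
      exact mul_le_of_le_one_right (by positivity) (mul_le_one₀ hxi (padicNorm.nonneg _) hS)

theorem padicNorm_neg_one_pow_mul_choose_sub_le {a : ℕ} (ha : a < p) :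
    padicNorm p ((-1) ^ a * (p - 1).choose a - (1 - p * harmonicNum a)) ≤
      (p : ℚ) ^ (-2 : ℤ) := by
  have hp := (Fact.out : p.Prime)
  have h := padicNorm_prod_one_add_mul_sub_le (p := p) (Icc 1 a) (t := p)
    (x := fun k => -(1 / k)) (padicNorm.of_nat p) fun k hk => by
      have hk := mem_Icc.mp hk
      rw [padicNorm.neg, padicNorm_one_div_natCast hk.1 (by omega)]
  rw [padicNorm.padicNorm_p_of_prime] at h
  convert h using 2
  · rw [neg_one_pow_mul_choose_eq_prod, Nat.cast_sub hp.one_le, Nat.cast_one, sub_add_cancel,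
      harmonicNum]
    simp only [mul_neg, ← sub_eq_add_neg, mul_one_div, sum_neg_distrib, mul_sum]
  · rw [zpow_neg, zpow_ofNat, inv_pow]

theorem padicNorm_wilsonQuotient_sub_sum_add_le (hp2 : p ≠ 2) :
    padicNorm p (wilsonQuotient p - ∑ a ∈ Icc 1 (p - 1), (fermatQuotient p a : ℚ)
      + p * ∑ a ∈ Icc 1 (p - 1), harmonicNum a * fermatQuotient p a) ≤
      (p : ℚ) ^ (-2 : ℤ) := by
  have hW := congrArg (Int.cast : ℤ → ℚ) (wilsonQuotient_eq_sum (Fact.out : p.Prime) hp2)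
  push_cast at hW
  rw [hW, mul_sum, ← sum_sub_distrib, ← sum_add_distrib]
  refine padicNorm.sum_le' (fun a ha => ?_) (by positivity)
  rw [show (-1) ^ a * ((p - 1).choose a : ℚ) * fermatQuotient p a - fermatQuotient p a
      + p * (harmonicNum a * fermatQuotient p a)
      = ((-1) ^ a * (p - 1).choose a - (1 - p * harmonicNum a)) * fermatQuotient p a by ring,
    padicNorm.mul]
  have hap : a < p := by have := (mem_Icc.mp ha).2; have := (Fact.out : p.Prime).pos; omega
  exact (mul_le_of_le_one_right (padicNorm.nonneg _) (padicNorm.of_int _)).trans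
    (padicNorm_neg_one_pow_mul_choose_sub_le hap)

end PadicNorm

end

theorem stmt_16 (p : ℕ) (hp : p.Prime) (hp3 : 3 < p) :
    IsLerchPrime p ↔
      ratCongr p 1 (∑ a ∈ Icc 1 (p - 1), harmonicNum a * (fermatQuotient p a : ℚ)) 0 := by
  have := Fact.mk hp
  have hE := padicNorm_wilsonQuotient_sub_sum_add_le (p := p) (by omega)
  rw [IsLerchPrime, ratCongr_zero_iff, ← padicNorm_prime_mul_le_iff, ← Nat.cast_pow,
    padicNorm.dvd_iff_norm_le]
  push_cast
  refine padicNorm_le_iff_of_padicNorm_sub_le (p := p) ?_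
  rw [← padicNorm.neg]
  convert hE using 2
  ring
end
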